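/- Let a be an action and R, R', R'' regions of a timed automaton with R →_* R'' (R'' is a time successor of R) and R'' →^a R'. If F is a simple function on the configurations of R', then for every configuration q = (s,R), the function t ↦ t + F(succ(q,(t,R'',a))) is continuous and nondecreasing on the interval I = {t ≥ 0 : s+t ∈ clos(R'')}, where succ(q,(t,R'',a)) = (succ(s,(t,a)), R'). -/

import Mathlib

noncomputable section

attribute [local instance] Classical.propDecidable

/-- A two-player (Min/Max) game arena with real-valued step costs. -/
structure Arena (Conf Move : Type) where
  Tr : Conf → Move → Conf → Prop
  cost : Conf → Move → ℝ
  IsMin : Conf → Prop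

namespace Arena

variable {Conf Move : Type}

/-- A finite run in the arena. -/
structure FinRun (G : Arena Conf Move) where
  n : ℕ
  q : Fin (n + 1) → Conf
  m : Fin n → Move
  valid : ∀ i : Fin n, G.Tr (q i.castSucc) (m i) (q i.succ)

/-- The last configuration of a finite run. -/
def FinRun.last {G : Arena Conf Move} (r : G.FinRun) : Conf := r.q (Fin.last r.n)

/-- The first configuration of a finite run. -/
def FinRun.first {G : Arena Conf Move} (r : G.FinRun) : Conf := r.q 0

/-- The trivial run consisting of a single configuration. -/
def single (G : Arena Conf Move) (q0 : Conf) : G.FinRun :=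
  ⟨0, fun _ => q0, Fin.elim0, fun i => i.elim0⟩

/-- Extending a finite run by one transition. -/
def FinRun.extend {G : Arena Conf Move} (r : G.FinRun) (mv : Move) (q' : Conf)
    (h : G.Tr r.last mv q') : G.FinRun where
  n := r.n + 1
  q := Fin.snoc r.q q'
  m := Fin.snoc r.m mv
  valid := by
    intro i
    induction i using Fin.lastCases with
    | last =>
        simpa only [FinRun.last, Fin.snoc_castSucc, Fin.succ_last, Fin.snoc_last] using h
    | cast j =>
        simpa only [Fin.snoc_castSucc, Fin.succ_castSucc] using r.valid j

/-- Strategies of player Min: mappings from finite runs to moves that are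
available whenever the last configuration belongs to Min. -/
def MinStrategy (G : Arena Conf Move) : Type :=
  {σ : G.FinRun → Move // ∀ r : G.FinRun, G.IsMin r.last → ∃ q', G.Tr r.last (σ r) q'}

/-- Strategies of player Max. -/
def MaxStrategy (G : Arena Conf Move) : Type :=
  {σ : G.FinRun → Move // ∀ r : G.FinRun, ¬ G.IsMin r.last → ∃ q', G.Tr r.last (σ r) q'}

/-- A strategy is positional if its choice depends only on the last configuration. -/
def Positional {G : Arena Conf Move} (σ : G.FinRun → Move) : Prop :=
  ∀ r r' : G.FinRun, r.last = r'.last → σ r = σ r'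

/-- The finite prefixes of the unique play from `q0` in which Min uses `μ`
and Max uses `χ`. -/
def play (G : Arena Conf Move) (μ : G.MinStrategy) (χ : G.MaxStrategy) (q0 : Conf) :
    ℕ → G.FinRun
  | 0 => G.single q0
  | n + 1 =>
    let r := G.play μ χ q0 n
    if h : G.IsMin r.last then
      r.extend (μ.1 r) (Classical.choose (μ.2 r h)) (Classical.choose_spec (μ.2 r h))
    else
      r.extend (χ.1 r) (Classical.choose (χ.2 r h)) (Classical.choose_spec (χ.2 r h))

/-- Total cost (e.g. total time) of a finite run. -/
def FinRun.time {G : Arena Conf Move} (r : G.FinRun) : ℝ :=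
  ∑ i : Fin r.n, G.cost (r.q i.castSucc) (r.m i)

/-- Payoff of player Min (to be minimised): limsup of average cost. -/
def AMin (G : Arena Conf Move) (q0 : Conf) (μ : G.MinStrategy) (χ : G.MaxStrategy) : ℝ :=
  Filter.limsup (fun n : ℕ => (G.play μ χ q0 n).time / n) Filter.atTop

/-- Payoff of player Max (to be maximised): liminf of average cost. -/
def AMax (G : Arena Conf Move) (q0 : Conf) (μ : G.MinStrategy) (χ : G.MaxStrategy) : ℝ :=
  Filter.liminf (fun n : ℕ => (G.play μ χ q0 n).time / n) Filter.atTop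

/-- Upper value of the game at `q0`. -/
def upperVal (G : Arena Conf Move) (q0 : Conf) : ℝ :=
  ⨅ μ : G.MinStrategy, ⨆ χ : G.MaxStrategy, G.AMin q0 μ χ

/-- Lower value of the game at `q0`. -/
def lowerVal (G : Arena Conf Move) (q0 : Conf) : ℝ :=
  ⨆ χ : G.MaxStrategy, ⨅ μ : G.MinStrategy, G.AMax q0 μ χ

/-- The value of the game at `q0` (meaningful when the game is determined). -/
def val (G : Arena Conf Move) (q0 : Conf) : ℝ := G.upperVal q0

end Arena
/-- `k`-bounded clock valuations. -/
def IsVal (k : ℕ) {C : Type} (ν : C → ℝ) : Prop := ∀ c, 0 ≤ ν c ∧ ν c ≤ (k : ℝ)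

/-- Two clock valuations satisfy exactly the same simple clock constraints
`c ⋈ i` and `c − c' ⋈ i` with `i ∈ {0,…,k}` and `⋈ ∈ {<,=,>}` (hence also ≤, ≥). -/
def RegEq (k : ℕ) {C : Type} (ν ν' : C → ℝ) : Prop :=
  ∀ i : ℕ, i ≤ k → ∀ c c' : C,
    ((ν c < (i : ℝ) ↔ ν' c < (i : ℝ)) ∧ (ν c = (i : ℝ) ↔ ν' c = (i : ℝ)) ∧
      ((i : ℝ) < ν c ↔ (i : ℝ) < ν' c)) ∧
    ((ν c - ν c' < (i : ℝ) ↔ ν' c - ν' c' < (i : ℝ)) ∧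
      (ν c - ν c' = (i : ℝ) ↔ ν' c - ν' c' = (i : ℝ)) ∧
      ((i : ℝ) < ν c - ν c' ↔ (i : ℝ) < ν' c - ν' c'))

/-- An average-time game on a (bounded) timed automaton: a timed automaton
together with a partition of locations between players Min and Max. -/
structure TimedGame where
  L : Type
  C : Type
  A : Type
  finL : Finite L
  finC : Finite C
  finA : Finite A
  k : ℕ
  S : Set (L × (C → ℝ))
  En : A → Set (L × (C → ℝ))
  δ : L → A → L
  ϱ : A → Set C
  LMin : Set L
  bounded : ∀ s ∈ S, IsVal k s.2
  S_zone : (∀ (ℓ : L) (ν ν' : C → ℝ), RegEq k ν ν' → ((ℓ, ν) ∈ S ↔ (ℓ, ν') ∈ S)) ∧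
    ∀ ℓ : L, Convex ℝ {ν : C → ℝ | (ℓ, ν) ∈ S}
  En_sub : ∀ a, En a ⊆ S
  En_zone : ∀ a : A,
    (∀ (ℓ : L) (ν ν' : C → ℝ), RegEq k ν ν' → ((ℓ, ν) ∈ En a ↔ (ℓ, ν') ∈ En a)) ∧
    ∀ ℓ : L, Convex ℝ {ν : C → ℝ | (ℓ, ν) ∈ En a}
  nonstuck : ∀ s ∈ S, ∃ (t : ℝ) (a : A), 0 ≤ t ∧
    (∀ t', 0 ≤ t' → t' ≤ t → (s.1, fun c => s.2 c + t') ∈ S) ∧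
    ((s.1, fun c => s.2 c + t) ∈ En a) ∧
    ((δ s.1 a, fun c => if c ∈ ϱ a then 0 else s.2 c + t) ∈ S)

namespace TimedGame

/-- Configurations of the timed automaton. -/
abbrev Q (T : TimedGame) : Type := T.L × (T.C → ℝ)

/-- Resetting the clocks in `X` to zero. -/
def resetv (T : TimedGame) (ν : T.C → ℝ) (X : Set T.C) : T.C → ℝ :=
  fun c => if c ∈ X then 0 else ν c

/-- The successor configuration after the timed action `τ = (t, a)`. -/
def tsucc (T : TimedGame) (s : T.Q) (τ : ℝ × T.A) : T.Q :=
  (T.δ s.1 τ.2, T.resetv (fun c => s.2 c + τ.1) (T.ϱ τ.2))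

/-- The transition relation `s →_τ s'` of the timed automaton. -/
def Trans (T : TimedGame) (s : T.Q) (τ : ℝ × T.A) (s' : T.Q) : Prop :=
  0 ≤ τ.1 ∧ (∀ t', 0 ≤ t' → t' ≤ τ.1 → (s.1, fun c => s.2 c + t') ∈ T.S) ∧
  ((s.1, fun c => s.2 c + τ.1) ∈ T.En τ.2) ∧ s' = T.tsucc s τ ∧ s' ∈ T.S

/-- The game arena of the average-time game played on the timed automaton. -/
def taArena (T : TimedGame) : Arena {s : T.Q // s ∈ T.S} (ℝ × T.A) where
  Tr := fun s τ s' => T.Trans s.1 τ s'.1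
  cost := fun _ τ => τ.1
  IsMin := fun s => s.1.1 ∈ T.LMin

/-- A clock region: an equivalence class of the region equivalence
(restricted to `k`-bounded valuations). -/
def IsClockRegion (T : TimedGame) (P : Set (T.C → ℝ)) : Prop :=
  ∃ ν : T.C → ℝ, P = {ν' | IsVal T.k ν' ∧ RegEq T.k ν ν'}

/-- Regions: pairs of a location and a clock region. -/
def Region (T : TimedGame) : Type :=
  T.L × {P : Set (T.C → ℝ) // T.IsClockRegion P}

/-- The clock region of a valuation. -/
def clockRegionOf (T : TimedGame) (ν : T.C → ℝ) : {P : Set (T.C → ℝ) // T.IsClockRegion P} :=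
  ⟨{ν' | IsVal T.k ν' ∧ RegEq T.k ν ν'}, ⟨ν, rfl⟩⟩

/-- The region `[s]` of a configuration `s`. -/
def regionOf (T : TimedGame) (s : T.Q) : T.Region := (s.1, T.clockRegionOf s.2)

/-- The configurations `Ω` of the region graphs: pairs of a configuration
of the timed automaton and a region. -/
abbrev Omega (T : TimedGame) : Type := T.Q × T.Region

/-- `(s, (ℓ, P))` is a state of the closed region graph: the locations match
and `s`'s valuation lies in the closure of the clock region `P`. -/
def barS (T : TimedGame) (q : T.Omega) : Prop :=
  q.1.1 = q.2.1 ∧ q.1.2 ∈ closure q.2.2.1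

/-- `(s, (ℓ, P))` is a state of the region graph: the locations match and
`s`'s valuation lies in the clock region `P`. -/
def tildeS (T : TimedGame) (q : T.Omega) : Prop :=
  q.1.1 = q.2.1 ∧ q.1.2 ∈ q.2.2.1

/-- `R →_* R'` : the region `R'` is a time successor of `R`. -/
def timeSucc (T : TimedGame) (R R' : T.Region) : Prop :=
  R.1 = R'.1 ∧ ∀ ν ∈ R.2.1, ∃ t : ℝ, 0 ≤ t ∧
    (∀ t', 0 ≤ t' → t' ≤ t → (R.1, fun c => ν c + t') ∈ T.S) ∧
    (fun c => ν c + t) ∈ R'.2.1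

/-- The discrete transition `s →^a s'` of the timed automaton. -/
def astep (T : TimedGame) (s : T.Q) (a : T.A) (s' : T.Q) : Prop :=
  s ∈ T.S ∧ s' ∈ T.S ∧ s ∈ T.En a ∧ s' = (T.δ s.1 a, T.resetv s.2 (T.ϱ a))

/-- `R →^a R'` at the level of regions. -/
def regAct (T : TimedGame) (R : T.Region) (a : T.A) (R' : T.Region) : Prop :=
  ∃ ν ∈ R.2.1, ∃ ν' ∈ R'.2.1, T.astep (R.1, ν) a (R'.1, ν')

/-- Moves of the region graphs: a delay, an intermediate region, and an action. -/
abbrev RMove (T : TimedGame) : Type := ℝ × T.Region × T.A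

/-- Transitions underlying pre-runs: `(s', R') = succ((s,R), (t,R'',a))` with
`R →_* R'' →^a R'`. -/
def preTrans (T : TimedGame) (q : T.Omega) (m : T.RMove) (q' : T.Omega) : Prop :=
  0 ≤ m.1 ∧ T.timeSucc q.2 m.2.1 ∧ T.regAct m.2.1 m.2.2 q'.2 ∧
  q'.1 = T.tsucc q.1 (m.1, m.2.2)

/-- Labelled transitions of the closed region graph `T̄`. -/
def cTrans (T : TimedGame) (q : T.Omega) (m : T.RMove) (q' : T.Omega) : Prop :=
  T.preTrans q m q' ∧ T.barS q ∧ T.barS q' ∧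
  (fun c => q.1.2 c + m.1) ∈ closure m.2.1.2.1

/-- Labelled transitions of the boundary region graph `T̂`: additionally the
intermediate valuation lies on the boundary of the intermediate region. -/
def bTrans (T : TimedGame) (q : T.Omega) (m : T.RMove) (q' : T.Omega) : Prop :=
  T.cTrans q m q' ∧ (fun c => q.1.2 c + m.1) ∈ frontier m.2.1.2.1

/-- Labelled transitions of the region graph `T̃`. -/
def rTrans (T : TimedGame) (q : T.Omega) (m : T.RMove) (q' : T.Omega) : Prop :=
  T.preTrans q m q' ∧ T.tildeS q ∧ T.tildeS q' ∧
  (fun c => q.1.2 c + m.1) ∈ m.2.1.2.1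

/-- The arena of pre-runs over `Ω`. -/
def preArena (T : TimedGame) : Arena T.Omega T.RMove where
  Tr := T.preTrans
  cost := fun _ m => m.1
  IsMin := fun q => q.2.1 ∈ T.LMin

/-- Finite pre-runs. -/
abbrev PreRunF (T : TimedGame) : Type := (T.preArena).FinRun

/-- Pre-strategies of Min. -/
abbrev MinPre (T : TimedGame) : Type := (T.preArena).MinStrategy

/-- Pre-strategies of Max. -/
abbrev MaxPre (T : TimedGame) : Type := (T.preArena).MaxStrategy

/-- A pre-strategy of Min is a strategy in the closed region graph `T̄`
if it always waits into the closure of the chosen intermediate region. -/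
def MinClosed (T : TimedGame) (μ : T.MinPre) : Prop :=
  ∀ r : T.PreRunF,
    (fun c => (Arena.FinRun.last r).1.2 c + (μ.1 r).1) ∈ closure (μ.1 r).2.1.2.1

def MaxClosed (T : TimedGame) (χ : T.MaxPre) : Prop :=
  ∀ r : T.PreRunF,
    (fun c => (Arena.FinRun.last r).1.2 c + (χ.1 r).1) ∈ closure (χ.1 r).2.1.2.1

/-- Admissible strategies: strategies in the region graph `T̃`. -/
def MinAdmissible (T : TimedGame) (μ : T.MinPre) : Prop :=
  ∀ r : T.PreRunF,
    (fun c => (Arena.FinRun.last r).1.2 c + (μ.1 r).1) ∈ (μ.1 r).2.1.2.1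

def MaxAdmissible (T : TimedGame) (χ : T.MaxPre) : Prop :=
  ∀ r : T.PreRunF,
    (fun c => (Arena.FinRun.last r).1.2 c + (χ.1 r).1) ∈ (χ.1 r).2.1.2.1

/-- Boundary strategies of Min: the delay is the **infimum** of the delays
reaching the closure of the chosen intermediate region. -/
def MinBoundary (T : TimedGame) (μ : T.MinPre) : Prop :=
  ∀ r : T.PreRunF,
    (μ.1 r).1 = sInf {t : ℝ | 0 ≤ t ∧
      (fun c => (Arena.FinRun.last r).1.2 c + t) ∈ closure (μ.1 r).2.1.2.1}

/-- Boundary strategies of Max: the delay is the **supremum** of the delays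
reaching the closure of the chosen intermediate region. -/
def MaxBoundary (T : TimedGame) (χ : T.MaxPre) : Prop :=
  ∀ r : T.PreRunF,
    (χ.1 r).1 = sSup {t : ℝ | 0 ≤ t ∧
      (fun c => (Arena.FinRun.last r).1.2 c + t) ∈ closure (χ.1 r).2.1.2.1}

/-- The sequence of regions visited by a finite pre-run (its type, part 1). -/
def typeConfs (T : TimedGame) (r : T.PreRunF) : ℕ → Option T.Region :=
  fun i => if h : i < r.n + 1 then some ((r.q ⟨i, h⟩).2) else none

/-- The sequence of intermediate regions and actions of a finite pre-run
(its type, part 2). -/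
def typeMoves (T : TimedGame) (r : T.PreRunF) : ℕ → Option (T.Region × T.A) :=
  fun i => if h : i < r.n then some ((r.m ⟨i, h⟩).2) else none

/-- Two finite pre-runs have the same type. -/
def sameType (T : TimedGame) (r r' : T.PreRunF) : Prop :=
  T.typeConfs r = T.typeConfs r' ∧ T.typeMoves r = T.typeMoves r'

/-- The waiting time `t(s, α)` of the boundary timed action `α = (b, c, a)`. -/
def tOf (T : TimedGame) (s : T.Q) (α : ℕ × T.C × T.A) : ℝ :=
  if s.2 α.2.1 ≤ (α.1 : ℝ) then (α.1 : ℝ) - s.2 α.2.1 else 0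

/-- Type-preserving boundary strategies of Min: runs of the same type are
assigned the same intermediate region, action and boundary timed action. -/
def MinTP (T : TimedGame) (μ : T.MinPre) : Prop :=
  T.MinBoundary μ ∧
  ∀ r r' : T.PreRunF, T.sameType r r' →
    (μ.1 r).2 = (μ.1 r').2 ∧
    ∃ (b : ℕ) (c : T.C), b ≤ T.k ∧
      (μ.1 r).1 = T.tOf (Arena.FinRun.last r).1 (b, c, (μ.1 r).2.2) ∧
      (μ.1 r').1 = T.tOf (Arena.FinRun.last r').1 (b, c, (μ.1 r').2.2)

def MaxTP (T : TimedGame) (χ : T.MaxPre) : Prop :=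
  T.MaxBoundary χ ∧
  ∀ r r' : T.PreRunF, T.sameType r r' →
    (χ.1 r).2 = (χ.1 r').2 ∧
    ∃ (b : ℕ) (c : T.C), b ≤ T.k ∧
      (χ.1 r).1 = T.tOf (Arena.FinRun.last r).1 (b, c, (χ.1 r).2.2) ∧
      (χ.1 r').1 = T.tOf (Arena.FinRun.last r').1 (b, c, (χ.1 r').2.2)

/-- `μ_ε` is `ε`-close to the type-preserving boundary strategy `μ` of Min. -/
def EpsCloseMin (T : TimedGame) (μ με : T.MinPre) (ε : ℝ) : Prop :=
  ∀ r : T.PreRunF, (με.1 r).2 = (μ.1 r).2 ∧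
    (fun c => (Arena.FinRun.last r).1.2 c + (με.1 r).1) ∈ (μ.1 r).2.1.2.1 ∧
    (με.1 r).1 ≤ (μ.1 r).1 + ε

/-- `χ_ε` is `ε`-close to the type-preserving boundary strategy `χ` of Max. -/
def EpsCloseMax (T : TimedGame) (χ χε : T.MaxPre) (ε : ℝ) : Prop :=
  ∀ r : T.PreRunF, (χε.1 r).2 = (χ.1 r).2 ∧
    (fun c => (Arena.FinRun.last r).1.2 c + (χε.1 r).1) ∈ (χ.1 r).2.1.2.1 ∧
    (χ.1 r).1 - ε ≤ (χε.1 r).1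

/-- Upper value of the game on the subgraph of region graphs whose strategies
are the pre-strategies satisfying `PMin`, `PMax` respectively. -/
def upperG (T : TimedGame) (PMin : T.MinPre → Prop) (PMax : T.MaxPre → Prop)
    (q : T.Omega) : ℝ :=
  ⨅ μ : {μ : T.MinPre // PMin μ}, ⨆ χ : {χ : T.MaxPre // PMax χ},
    Arena.AMin T.preArena q μ.1 χ.1

/-- Lower value. -/
def lowerG (T : TimedGame) (PMin : T.MinPre → Prop) (PMax : T.MaxPre → Prop)
    (q : T.Omega) : ℝ :=
  ⨆ χ : {χ : T.MaxPre // PMax χ}, ⨅ μ : {μ : T.MinPre // PMin μ},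
    Arena.AMax T.preArena q μ.1 χ.1

def upperBar (T : TimedGame) : T.Omega → ℝ := T.upperG T.MinClosed T.MaxClosed
def lowerBar (T : TimedGame) : T.Omega → ℝ := T.lowerG T.MinClosed T.MaxClosed
/-- The value of the average-time game on the closed region graph `T̄`. -/
def valBar (T : TimedGame) : T.Omega → ℝ := T.upperBar

def upperHat (T : TimedGame) : T.Omega → ℝ := T.upperG T.MinBoundary T.MaxBoundary
def lowerHat (T : TimedGame) : T.Omega → ℝ := T.lowerG T.MinBoundary T.MaxBoundary
/-- The value of the average-time game on the boundary region graph `T̂`. -/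
def valHat (T : TimedGame) : T.Omega → ℝ := T.upperHat

def upperTilde (T : TimedGame) : T.Omega → ℝ := T.upperG T.MinAdmissible T.MaxAdmissible
def lowerTilde (T : TimedGame) : T.Omega → ℝ := T.lowerG T.MinAdmissible T.MaxAdmissible
/-- The value of the average-time game on the region graph `T̃`. -/
def valTilde (T : TimedGame) : T.Omega → ℝ := T.upperTilde

/-- A function is simple on a set `X` of configurations. -/
def SimpleOn (T : TimedGame) (X : Set T.Omega) (F : T.Omega → ℝ) : Prop :=
  (∃ e : ℤ, ∀ q ∈ X, F q = (e : ℝ)) ∨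
  (∃ (e : ℤ) (c : T.C), ∀ q ∈ X, F q = (e : ℝ) - q.1.2 c)

/-- A function on the configurations of the closed region graph is regionally
simple. -/
def RegionallySimple (T : TimedGame) (F : T.Omega → ℝ) : Prop :=
  ∀ R : T.Region, T.SimpleOn {q : T.Omega | T.barS q ∧ q.2 = R} F

/-- A function on the configurations of the closed region graph is regionally
constant. -/
def RegionallyConstant (T : TimedGame) (F : T.Omega → ℝ) : Prop :=
  ∀ R : T.Region, ∃ v : ℝ, ∀ q : T.Omega, T.barS q → q.2 = R → F q = v

/-- The configuration `(s, [s])` of the region graphs determined by a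
configuration `s` of the timed automaton. -/
def confOf (T : TimedGame) (s : T.Q) : T.Omega := (s, T.regionOf s)

/-- A region is thin if some clock has an integer value throughout its closure. -/
def Thin (T : TimedGame) (R : T.Region) : Prop :=
  ∃ c : T.C, ∀ ν ∈ closure R.2.1, ∃ m : ℤ, ν c = (m : ℝ)

/-- `R'` is the immediate time successor of `R`. -/
def ImmTimeSucc (T : TimedGame) (R R' : T.Region) : Prop :=
  R.1 = R'.1 ∧ ∀ ν ∈ R.2.1, ∃ ε : ℝ, 0 < ε ∧
    ∀ t : ℝ, 0 < t → t < ε → (fun c => ν c + t) ∈ R'.2.1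

end TimedGame

/-! On `I` the successor valuation lies in the closure of `R'`: resets preserve region
equivalence, so the (continuous) reset map sends `R''` into `R'`. There `F` is `e` or
`e - ν c`, and along the delay the clock `c` is either reset to `0` or equal to `s c + t`.
Hence `t + F (succ …)` is `t + e` or the constant `e - s c` on `I`, an affine function of
slope `1` or `0`. -/

lemma RegEq.symm {k : ℕ} {C : Type} {ν ν' : C → ℝ} (h : RegEq k ν ν') :
    RegEq k ν' ν := by
  intro i hi c c'
  obtain ⟨⟨a1, a2, a3⟩, b1, b2, b3⟩ := h i hi c c'
  exact ⟨⟨a1.symm, a2.symm, a3.symm⟩, b1.symm, b2.symm, b3.symm⟩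

lemma RegEq.trans {k : ℕ} {C : Type} {ν ν' ν'' : C → ℝ} (h : RegEq k ν ν')
    (h' : RegEq k ν' ν'') : RegEq k ν ν'' := by
  intro i hi c c'
  obtain ⟨⟨a1, a2, a3⟩, b1, b2, b3⟩ := h i hi c c'
  obtain ⟨⟨a1', a2', a3'⟩, b1', b2', b3'⟩ := h' i hi c c'
  exact ⟨⟨a1.trans a1', a2.trans a2', a3.trans a3'⟩,
    b1.trans b1', b2.trans b2', b3.trans b3'⟩

lemma neg_cmp_natCast_iff_of_eq_zero_iff {x x' : ℝ} (hx : 0 ≤ x) (hx' : 0 ≤ x')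
    (h0 : x = 0 ↔ x' = 0) (i : ℕ) :
    (-x < i ↔ -x' < i) ∧ (-x = i ↔ -x' = i) ∧ ((i : ℝ) < -x ↔ (i : ℝ) < -x') := by
  by_cases hx0 : x = 0
  · obtain rfl := hx0
    obtain rfl := h0.mp rfl
    exact ⟨Iff.rfl, Iff.rfl, Iff.rfl⟩
  · have hxpos : 0 < x := lt_of_le_of_ne hx (Ne.symm hx0)
    have hx'pos : 0 < x' := lt_of_le_of_ne hx' fun h => hx0 (h0.mpr h.symm)
    have hi : (0 : ℝ) ≤ i := i.cast_nonneg
    refine ⟨?_, ?_, ?_⟩ <;> constructor <;> intro <;> linarith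

lemma IsVal.reset {k : ℕ} {C : Type} {ν : C → ℝ} (hν : IsVal k ν) (X : Set C) :
    IsVal k (fun c => if c ∈ X then 0 else ν c) := by
  intro c
  dsimp only
  split_ifs
  · exact ⟨le_rfl, Nat.cast_nonneg k⟩
  · exact hν c

lemma RegEq.reset {k : ℕ} {C : Type} {ν ν' : C → ℝ} (h : RegEq k ν ν')
    (hν : ∀ c, 0 ≤ ν c) (hν' : ∀ c, 0 ≤ ν' c) (X : Set C) :
    RegEq k (fun c => if c ∈ X then 0 else ν c) (fun c => if c ∈ X then 0 else ν' c) := by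
  intro i hi c c'
  have hzero (d : C) : ν d = 0 ↔ ν' d = 0 := by
    simpa only [Nat.cast_zero] using (h 0 (Nat.zero_le k) d d).1.2.1
  by_cases hc : c ∈ X <;> by_cases hc' : c' ∈ X <;>
    simp only [hc, hc', if_true, if_false, sub_self, sub_zero, zero_sub, iff_self, and_self,
      true_and]
  · exact neg_cmp_natCast_iff_of_eq_zero_iff (hν c') (hν' c') (hzero c') i
  · exact (h i hi c c).1
  · exact h i hi c c'

namespace TimedGame

variable {T : TimedGame}

lemma IsClockRegion.regEq {P : Set (T.C → ℝ)} (hP : T.IsClockRegion P) {ν ν' : T.C → ℝ}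
    (hν : ν ∈ P) (hν' : ν' ∈ P) : RegEq T.k ν ν' := by
  obtain ⟨μ, rfl⟩ := hP
  exact hν.2.symm.trans hν'.2

lemma IsClockRegion.isVal {P : Set (T.C → ℝ)} (hP : T.IsClockRegion P) {ν : T.C → ℝ}
    (hν : ν ∈ P) : IsVal T.k ν := by
  obtain ⟨μ, rfl⟩ := hP
  exact hν.1

lemma IsClockRegion.mem_of_regEq {P : Set (T.C → ℝ)} (hP : T.IsClockRegion P)
    {ν ν' : T.C → ℝ} (hν : ν ∈ P) (hν' : IsVal T.k ν') (h : RegEq T.k ν ν') : ν' ∈ P := by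
  obtain ⟨μ, rfl⟩ := hP
  exact ⟨hν', hν.2.trans h⟩

lemma continuous_resetv (X : Set T.C) : Continuous fun ν : T.C → ℝ => T.resetv ν X :=
  continuous_pi fun c => by
    by_cases hc : c ∈ X
    · simpa only [resetv, hc, if_true] using continuous_const
    · simpa only [resetv, hc, if_false] using continuous_apply c

lemma resetv_mapsTo_of_regAct {a : T.A} {R'' R' : T.Region} (h : T.regAct R'' a R') :
    Set.MapsTo (fun ν => T.resetv ν (T.ϱ a)) R''.2.1 R'.2.1 := by
  obtain ⟨ν, hν, ν', hν', -, -, -, hstep⟩ := h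
  have hν'_eq : ν' = T.resetv ν (T.ϱ a) := congrArg Prod.snd hstep
  subst hν'_eq
  intro u hu
  have hνval := R''.2.2.isVal hν
  have huval := R''.2.2.isVal hu
  exact R'.2.2.mem_of_regEq hν' (huval.reset _) <|
    (R''.2.2.regEq hν hu).reset (fun c => (hνval c).1) (fun c => (huval c).1) _

lemma resetv_mem_closure_of_regAct {a : T.A} {R'' R' : T.Region} (h : T.regAct R'' a R')
    {ν : T.C → ℝ} (hν : ν ∈ closure R''.2.1) : T.resetv ν (T.ϱ a) ∈ closure R'.2.1 :=
  map_mem_closure (f := fun ν => T.resetv ν (T.ϱ a)) (continuous_resetv _) hν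
    (resetv_mapsTo_of_regAct h)

lemma tsucc_fst_of_regAct {a : T.A} {R'' R' : T.Region} (h : T.regAct R'' a R')
    {s : T.Q} (hs : s.1 = R''.1) (t : ℝ) : (T.tsucc s (t, a)).1 = R'.1 := by
  obtain ⟨_, _, _, _, _, _, _, hstep⟩ := h
  rw [congrArg Prod.fst hstep]
  exact congrArg (T.δ · a) hs

lemma exists_affine_eqOn_add_simpleOn_tsucc {X : Set T.Omega} {F : T.Omega → ℝ}
    (hF : T.SimpleOn X F) {s : T.Q} {a : T.A} {R' : T.Region} {I : Set ℝ}
    (hX : ∀ t ∈ I, (T.tsucc s (t, a), R') ∈ X) :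
    ∃ m b : ℝ, 0 ≤ m ∧
      Set.EqOn (fun t => t + F (T.tsucc s (t, a), R')) (fun t => m * t + b) I := by
  rcases hF with ⟨e, he⟩ | ⟨e, c, he⟩
  · exact ⟨1, e, zero_le_one, fun t ht => by simp only [he _ (hX t ht), one_mul]⟩
  by_cases hc : c ∈ T.ϱ a
  · refine ⟨1, e, zero_le_one, fun t ht => ?_⟩
    dsimp only
    rw [he _ (hX t ht)]
    simp only [tsucc, resetv, hc, if_true]
    ring
  · refine ⟨0, e - s.2 c, le_rfl, fun t ht => ?_⟩
    dsimp only
    rw [he _ (hX t ht)]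
    simp only [tsucc, resetv, hc, if_false]
    ring

end TimedGame

theorem simple_plus_time_continuous_nondecreasing_general (T : TimedGame)
    (a : T.A) (R R' R'' : T.Region)
    (h1 : T.timeSucc R R'') (h2 : T.regAct R'' a R')
    (F : T.Omega → ℝ)
    (hF : T.SimpleOn {q : T.Omega |
      q.1.1 = R'.1 ∧ q.1.2 ∈ closure R'.2.1 ∧ q.2 = R'} F)
    (s : T.Q) (hloc : s.1 = R.1) :
    ContinuousOn (fun t : ℝ => t + F (T.tsucc s (t, a), R'))
      {t : ℝ | 0 ≤ t ∧ (fun c => s.2 c + t) ∈ closure R''.2.1} ∧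
    MonotoneOn (fun t : ℝ => t + F (T.tsucc s (t, a), R'))
      {t : ℝ | 0 ≤ t ∧ (fun c => s.2 c + t) ∈ closure R''.2.1} := by
  obtain ⟨m, b, hm, heq⟩ := TimedGame.exists_affine_eqOn_add_simpleOn_tsucc hF
    (I := {t | 0 ≤ t ∧ (fun c => s.2 c + t) ∈ closure R''.2.1}) fun t ht =>
    ⟨TimedGame.tsucc_fst_of_regAct h2 (hloc.trans h1.1) t,
      TimedGame.resetv_mem_closure_of_regAct h2 ht.2, rfl⟩
  refine ⟨(by fun_prop : Continuous fun t : ℝ => m * t + b).continuousOn.congr heq,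
    MonotoneOn.congr ?_ heq.symm⟩
  intro x _ y _ hxy
  dsimp only
  gcongr

/-- If `R →_* R'' →^a R'` and `F` is simple on the configurations of `R'`,
then for every configuration `q = (s, R)` the function
`t ↦ t + F(succ(q, (t, R'', a)))` is continuous and nondecreasing on
`I = {t ≥ 0 : s + t ∈ clos(R'')}`. -/
theorem simple_plus_time_continuous_nondecreasing (T : TimedGame)
    (a : T.A) (R R' R'' : T.Region)
    (h1 : T.timeSucc R R'') (h2 : T.regAct R'' a R')
    (F : T.Omega → ℝ)
    (hF : T.SimpleOn {q : T.Omega |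
      q.1.1 = R'.1 ∧ q.1.2 ∈ closure R'.2.1 ∧ q.2 = R'} F)
    (s : T.Q) (hloc : s.1 = R.1) (hs : s.2 ∈ closure R.2.1) :
    ContinuousOn (fun t : ℝ => t + F (T.tsucc s (t, a), R'))
      {t : ℝ | 0 ≤ t ∧ (fun c => s.2 c + t) ∈ closure R''.2.1} ∧
    MonotoneOn (fun t : ℝ => t + F (T.tsucc s (t, a), R'))
      {t : ℝ | 0 ≤ t ∧ (fun c => s.2 c + t) ∈ closure R''.2.1} :=
  simple_plus_time_continuous_nondecreasing_general T a R R' R'' h1 h2 F hF s hloc
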